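/- Any infinite circuit of a transversal matroid contains an element which does not lie in any finite circuit. -/

import Mathlib

open Set

section Bipartite

variable {V W : Type*}

/-- `m` is a matching in the bipartite graph with edge set `E ⊆ V × W`. -/
def IsBipMatching (E m : Set (V × W)) : Prop :=
  m ⊆ E ∧ ∀ p ∈ m, ∀ q ∈ m, (p.1 = q.1 ∨ p.2 = q.2) → p = q

/-- `I ⊆ V` is matchable in the bipartite graph with edge set `E`. -/
def Matchable (E : Set (V × W)) (I : Set V) : Prop :=
  ∃ m, IsBipMatching E m ∧ Prod.fst '' m = I

/-- One step along an edge of `F` in the bipartite graph, on vertex type `V ⊕ W`. -/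
def bipStep (F : Set (V × W)) : (V ⊕ W) → (V ⊕ W) → Prop := fun a b =>
  match a, b with
  | Sum.inl v, Sum.inr w => (v, w) ∈ F
  | Sum.inr w, Sum.inl v => (v, w) ∈ F
  | _, _ => False

/-- Every connected component of the bipartite graph with edge set `F` is finite. -/
def FiniteComponents (F : Set (V × W)) : Prop :=
  ∀ x : V ⊕ W, {y | Relation.ReflTransGen (bipStep F) x y}.Finite

/-- `m` is an `m0`-matching: a matching such that every component of `m0 ∪ m` is finite. -/
def IsM0Matching (E m0 m : Set (V × W)) : Prop :=
  IsBipMatching E m ∧ FiniteComponents (m0 ∪ m)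

/-- `I` is `m0`-matchable. -/
def M0Matchable (E m0 : Set (V × W)) (I : Set V) : Prop :=
  ∃ m, IsM0Matching E m0 m ∧ Prod.fst '' m = I

/-- `I` is `m0`-matchable onto `W'`. -/
def M0MatchableOnto (E m0 : Set (V × W)) (I : Set V) (W' : Set W) : Prop :=
  ∃ m, IsM0Matching E m0 m ∧ Prod.fst '' m = I ∧ Prod.snd '' m = W'

end Bipartite

section Star

variable {V : Type*}

/-- The edge set of the converted bimaze of the dimaze `(D, B0)`: the right class is
`{v ∣ v ∉ B0}` (representing `(V \ B0)⋆`) and the edges are the identity matching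
together with `v u⋆` for every edge `(u, v)` of `D`. -/
def starEdges (D : V → V → Prop) (B0 : Set V) : Set (V × V) :=
  {p | (p.1 = p.2 ∧ p.2 ∉ B0) ∨ (D p.2 p.1 ∧ p.2 ∉ B0)}

/-- The identity matching of the converted bimaze. -/
def starM0 (B0 : Set V) : Set (V × V) := {p | p.1 = p.2 ∧ p.1 ∉ B0}

end Star
/-- Deletion of `X` from the matroid `M`. -/
def Matroid.del {α : Type*} (M : Matroid α) (X : Set α) : Matroid α := M.restrict (M.E \ X)

/-- Contraction of `X` in the matroid `M`, defined via duality. -/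
def Matroid.con {α : Type*} (M : Matroid α) (X : Set α) : Matroid α := (M.dual.del X).dual

/-- `C` is a circuit of `M`: a minimal dependent set. -/
def Matroid.IsCircuitOf {α : Type*} (M : Matroid α) (C : Set α) : Prop :=
  C ⊆ M.E ∧ ¬ M.Indep C ∧ ∀ C' ⊂ C, M.Indep C'

/-- `e` is a coloop of `M`: an element of the ground set lying in no circuit. -/
def Matroid.IsColoopOf {α : Type*} (M : Matroid α) (e : α) : Prop :=
  e ∈ M.E ∧ ∀ C, M.IsCircuitOf C → e ∉ C

/-- `N` is a minor of `M`. -/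
def Matroid.IsMinorOf {α : Type*} (N M : Matroid α) : Prop :=
  ∃ C D, C ⊆ M.E ∧ D ⊆ M.E ∧ Disjoint C D ∧ N = (M.con C).del D

/-!
Suppose every element of the infinite circuit `C` lies in a finite circuit `D`. Then every
`x ∈ C` has only finitely many neighbours: otherwise a matching of the finite set `D \ {x}`
could be extended by an edge at `x` avoiding its finitely many partners, making `D`
independent. Every finite subset of `C` is a proper subset, hence matchable, so Hall's
condition holds on `C`; since all neighbourhoods are finite, Hall's theorem for infinite
families matches all of `C`, contradicting its dependence.
-/

section Matching

variable {V W : Type*} {E : Set (V × W)}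

theorem IsBipMatching.injOn_fst {m : Set (V × W)} (hm : IsBipMatching E m) :
    InjOn Prod.fst m :=
  fun p hp q hq h => hm.2 p hp q hq (Or.inl h)

theorem IsBipMatching.insert {m : Set (V × W)} (hm : IsBipMatching E m) {x : V} {w : W}
    (hxw : (x, w) ∈ E) (hx : x ∉ Prod.fst '' m) (hw : w ∉ Prod.snd '' m) :
    IsBipMatching E (insert (x, w) m) := by
  refine ⟨insert_subset hxw hm.1, ?_⟩
  rintro p (rfl | hp) q (rfl | hq) hpq
  · rfl
  · rcases hpq with h | h
    exacts [(hx ⟨q, hq, h.symm⟩).elim, (hw ⟨q, hq, h.symm⟩).elim]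
  · rcases hpq with h | h
    exacts [(hx ⟨p, hp, h⟩).elim, (hw ⟨p, hp, h⟩).elim]
  · exact hm.2 p hp q hq hpq

theorem matchable_iff_exists_injective {I : Set V} :
    Matchable E I ↔ ∃ f : I → W, Function.Injective f ∧ ∀ x : I, (x.1, f x) ∈ E := by
  constructor
  · rintro ⟨m, hm, rfl⟩
    choose p hpm hpx using fun x : Prod.fst '' m => x.2
    refine ⟨fun x => (p x).2, fun x y hxy => ?_, fun x => ?_⟩
    · have hpq := hm.2 _ (hpm x) _ (hpm y) (Or.inr hxy)
      exact Subtype.ext ((hpx x).symm.trans ((congrArg Prod.fst hpq).trans (hpx y)))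
    · simpa [← hpx x] using hm.1 (hpm x)
  · rintro ⟨f, hf, hfE⟩
    refine ⟨range fun x : I => (x.1, f x), ⟨?_, ?_⟩, ?_⟩
    · rintro _ ⟨x, rfl⟩
      exact hfE x
    · rintro _ ⟨x, rfl⟩ _ ⟨y, rfl⟩ (h | h)
      · rw [Subtype.ext h]
      · rw [hf h]
    · ext v
      simp

theorem Matchable.insert_of_infinite {I : Set V} (hI : Matchable E I) (hIfin : I.Finite)
    {x : V} (hx : {w | (x, w) ∈ E}.Infinite) : Matchable E (insert x I) := by
  by_cases hxI : x ∈ I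
  · rwa [insert_eq_of_mem hxI]
  obtain ⟨m, hm, rfl⟩ := hI
  have hmfin : m.Finite := hIfin.of_finite_image hm.injOn_fst
  obtain ⟨w, hxw, hw⟩ := (hx.sdiff (hmfin.image Prod.snd)).nonempty
  exact ⟨_, hm.insert hxw hxI hw, image_insert_eq⟩

theorem matchable_of_forall_finite {I : Set V} (hnbhd : ∀ x ∈ I, {w | (x, w) ∈ E}.Finite)
    (hfin : ∀ J ⊆ I, J.Finite → Matchable E J) : Matchable E I := by
  classical
  let t : I → Finset W := fun x => (hnbhd x x.2).toFinset
  have hall : ∀ s : Finset I, s.card ≤ (s.biUnion t).card := by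
    intro s
    obtain ⟨f, hf, hfE⟩ := matchable_iff_exists_injective.1 <|
      hfin (Subtype.val '' (s : Set I)) (by simp) (s.finite_toSet.image _)
    let φ : s → s.biUnion t := fun x =>
      ⟨f ⟨x.1, mem_image_of_mem _ x.2⟩,
        Finset.mem_biUnion.2 ⟨x, x.2, by simpa [t] using hfE ⟨x.1, mem_image_of_mem _ x.2⟩⟩⟩
    refine Finset.card_le_card_of_injective (f := φ) fun x y hxy => ?_
    have hxy' := hf (Subtype.ext_iff.1 hxy)
    ext
    exact Subtype.mk.inj hxy'
  obtain ⟨f, hf, hft⟩ := (Finset.all_card_le_biUnion_card_iff_exists_injective t).1 hall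
  exact matchable_iff_exists_injective.2 ⟨f, hf, fun x => by simpa [t] using hft x⟩

end Matching

theorem Matroid.IsCircuitOf.indep_of_finite {α : Type*} {M : Matroid α} {C J : Set α}
    (hC : M.IsCircuitOf C) (hCinf : C.Infinite) (hJC : J ⊆ C) (hJ : J.Finite) : M.Indep J :=
  hC.2.2 J (hJC.ssubset_of_ne fun h => hCinf (h ▸ hJ))

theorem finite_nbhd_of_mem_finite_circuit {V W : Type*} {E : Set (V × W)} {M : Matroid V}
    (hInd : ∀ I, M.Indep I ↔ Matchable E I) {D : Set V} (hD : M.IsCircuitOf D)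
    (hDfin : D.Finite) {x : V} (hxD : x ∈ D) : {w | (x, w) ∈ E}.Finite := by
  by_contra hinf
  apply hD.2.1
  have hmatch := ((hInd _).1 (hD.2.2 _ (sdiff_singleton_ssubset.2 hxD))).insert_of_infinite
    hDfin.sdiff hinf
  rwa [insert_sdiff_singleton, insert_eq_of_mem hxD, ← hInd] at hmatch

theorem infinite_circuit_of_transversal {V W : Type*} (E : Set (V × W)) (M : Matroid V)
    (hInd : ∀ I, M.Indep I ↔ Matchable E I)
    (C : Set V) (hC : M.IsCircuitOf C) (hCinf : C.Infinite) :
    ∃ x ∈ C, ∀ C', M.IsCircuitOf C' → C'.Finite → x ∉ C' := by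
  by_contra! h
  have hnbhd : ∀ x ∈ C, {w | (x, w) ∈ E}.Finite := fun x hx => by
    obtain ⟨D, hD, hDfin, hxD⟩ := h x hx
    exact finite_nbhd_of_mem_finite_circuit hInd hD hDfin hxD
  have hmatch : Matchable E C := matchable_of_forall_finite hnbhd fun J hJC hJ =>
    (hInd J).1 (hC.indep_of_finite hCinf hJC hJ)
  exact hC.2.1 ((hInd C).2 hmatch)
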